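/- Let σ, γ > 0 and n̄ ∈ (0,1] with β·n̄ > γ. Then the largest root λ_SEIR(σ) = (−(σ+γ) + √((σ+γ)² + 4σ(β·n̄ − γ)))/2 is strictly increasing in σ on (0, ∞), and λ_SEIR(σ) → β·n̄ − γ as σ → ∞. -/

import Mathlib

/-!
Rationalising the numerator and dividing by `σ` writes the growth rate as
`2a / (1 + γ/σ + √((1 + γ/σ)² + 4a/σ))` with `a = β·n̄ − γ > 0`, a function of the mean latent
period `1/σ`. Its denominator increases strictly with `1/σ`, so the rate increases with `σ`, and at
`1/σ = 0` the expression is continuous with value `2a / 2 = a`.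
-/

open Set Real Filter

noncomputable def growthRateOfLatentPeriod (γ a t : ℝ) : ℝ :=
  2 * a / (1 + γ * t + √((1 + γ * t) ^ 2 + 4 * a * t))

theorem neg_add_sqrt_sq_add_div_two {b c : ℝ} (hb : 0 < b) (hc : 0 ≤ c) :
    (-b + √(b ^ 2 + c)) / 2 = c / (2 * (b + √(b ^ 2 + c))) := by
  have hsq : √(b ^ 2 + c) ^ 2 = b ^ 2 + c := sq_sqrt (by positivity)
  have hpos : 0 < b + √(b ^ 2 + c) := by positivity
  field_simp
  linear_combination hsq

theorem growthRate_eq_growthRateOfLatentPeriod {γ a σ : ℝ} (hγ : 0 ≤ γ) (ha : 0 ≤ a)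
    (hσ : 0 < σ) :
    (-(σ + γ) + √((σ + γ) ^ 2 + 4 * σ * a)) / 2 = growthRateOfLatentPeriod γ a σ⁻¹ := by
  have hscale : (1 + γ * σ⁻¹) ^ 2 + 4 * a * σ⁻¹ = ((σ + γ) ^ 2 + 4 * σ * a) * σ⁻¹ ^ 2 := by
    field_simp
  have hsqrt : √((1 + γ * σ⁻¹) ^ 2 + 4 * a * σ⁻¹) = √((σ + γ) ^ 2 + 4 * σ * a) * σ⁻¹ := by
    rw [hscale, sqrt_mul (by positivity), sqrt_sq (by positivity)]
  rw [neg_add_sqrt_sq_add_div_two (by positivity) (by positivity), growthRateOfLatentPeriod,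
    hsqrt]
  field_simp
  ring

theorem strictAntiOn_growthRateOfLatentPeriod {γ a : ℝ} (hγ : 0 ≤ γ) (ha : 0 < a) :
    StrictAntiOn (growthRateOfLatentPeriod γ a) (Ici 0) := by
  intro s hs t ht hst
  rw [mem_Ici] at hs ht
  have hlin : 1 + γ * s ≤ 1 + γ * t := by gcongr
  have hroot : √((1 + γ * s) ^ 2 + 4 * a * s) < √((1 + γ * t) ^ 2 + 4 * a * t) :=
    sqrt_lt_sqrt (by positivity) (add_lt_add_of_le_of_lt (by gcongr) (by gcongr))
  unfold growthRateOfLatentPeriod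
  gcongr ?_ / ?_
  linarith

theorem tendsto_growthRateOfLatentPeriod_zero (γ a : ℝ) :
    Tendsto (growthRateOfLatentPeriod γ a) (nhds 0) (nhds a) := by
  have hcont : ContinuousAt (growthRateOfLatentPeriod γ a) 0 := by
    refine ContinuousAt.div (by fun_prop) (by fun_prop) ?_
    simp
  simpa [growthRateOfLatentPeriod, one_add_one_eq_two] using hcont.tendsto

theorem seir_growth_monotone_in_sigma_general
    (β γ nbar : ℝ) (hγ : 0 < γ)
    (hsup : γ < β * nbar)
    (lamSEIR : ℝ → ℝ)
    (hlam : ∀ σ : ℝ, lamSEIR σ =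
      (-(σ + γ) + Real.sqrt ((σ + γ) ^ 2 + 4 * σ * (β * nbar - γ))) / 2) :
    StrictMonoOn lamSEIR (Ioi (0:ℝ)) ∧
    Tendsto lamSEIR atTop (nhds (β * nbar - γ)) := by
  have ha : 0 < β * nbar - γ := sub_pos.mpr hsup
  have hrate : ∀ σ ∈ Ioi (0 : ℝ),
      lamSEIR σ = growthRateOfLatentPeriod γ (β * nbar - γ) σ⁻¹ := fun σ hσ => by
    rw [hlam, growthRate_eq_growthRateOfLatentPeriod hγ.le ha.le hσ]
  constructor
  · intro σ hσ τ hτ hστ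
    rw [hrate σ hσ, hrate τ hτ]
    exact strictAntiOn_growthRateOfLatentPeriod hγ.le ha (mem_Ici.mpr (inv_pos.mpr hτ).le)
      (mem_Ici.mpr (inv_pos.mpr hσ).le) (inv_strictAntiOn hσ hτ hστ)
  · refine ((tendsto_growthRateOfLatentPeriod_zero γ _).comp tendsto_inv_atTop_zero).congr' ?_
    filter_upwards [eventually_gt_atTop 0] with σ hσ using (hrate σ hσ).symm

theorem seir_growth_monotone_in_sigma
    (β γ nbar : ℝ) (hγ : 0 < γ) (hn : 0 < nbar) (hn1 : nbar ≤ 1)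
    (hsup : γ < β * nbar)
    (lamSEIR : ℝ → ℝ)
    (hlam : ∀ σ : ℝ, lamSEIR σ =
      (-(σ + γ) + Real.sqrt ((σ + γ) ^ 2 + 4 * σ * (β * nbar - γ))) / 2) :
    StrictMonoOn lamSEIR (Ioi (0:ℝ)) ∧
    Tendsto lamSEIR atTop (nhds (β * nbar - γ)) :=
  seir_growth_monotone_in_sigma_general β γ nbar hγ hsup lamSEIR hlam
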